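/- Define F: ℝ^N → ℝ^d, d = (N-1)(N+2)/2, by stacking F₀(x) = (x₁² - x₂², ..., x₁² - x_N²) and F_k(x) = (x_k x_{k+1}, ..., x_k x_N) for k = 1,...,N-1. A frame Φ = {φ_k}_{k=1}^M ⊂ ℝ^N is scalable (there exist nonnegative scalars x_k, not all zero, such that {x_k φ_k} is a tight frame) if and only if there exists a nonzero nonnegative vector u in the kernel of the d×M matrix F(Φ) whose columns are F(φ_k), such that Σ_k u_k φ_k φ_kᵀ ≠ 0. -/
import Mathlib


open scoped Matrix

/-- The quadratic map `F : ℝ^N → ℝ^d`, `d = (N-1)(N+2)/2`, with components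
`x₁² - x_j²` for `j = 2,…,N` (indexed by `Fin (N-1)`) and `x_i x_j` for
`i < j` (indexed by ordered pairs). -/
def Fmap {N : ℕ} (hN : 0 < N) (x : Fin N → ℝ) :
    Fin (N - 1) ⊕ {p : Fin N × Fin N // p.1 < p.2} → ℝ
  | Sum.inl j => x ⟨0, hN⟩ ^ 2 - x ⟨j.val + 1, by have := j.isLt; omega⟩ ^ 2
  | Sum.inr p => x p.1.1 * x p.1.2

/-- A frame `Φ` for `ℝ^N` is scalable iff there is a nonzero nonnegative vector
`u` in the kernel of the matrix `F(Φ)` with `Σ_k u_k φ_k φ_kᵀ ≠ 0`. -/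
theorem scalable_iff_kernel (N M : ℕ) (hN : 0 < N) (hM : N ≤ M)
    (φ : Fin M → (Fin N → ℝ)) (hframe : Submodule.span ℝ (Set.range φ) = ⊤) :
    (∃ x : Fin M → ℝ, (∀ k, 0 ≤ x k) ∧ x ≠ 0 ∧ ∃ A : ℝ, 0 < A ∧
      ∑ k, Matrix.vecMulVec (x k • φ k) (x k • φ k)
        = A • (1 : Matrix (Fin N) (Fin N) ℝ)) ↔
    (∃ u : Fin M → ℝ, (∀ k, 0 ≤ u k) ∧ u ≠ 0 ∧
      (Matrix.of fun r k => Fmap hN (φ k) r).mulVec u = 0 ∧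
      ∑ k, u k • Matrix.vecMulVec (φ k) (φ k) ≠ 0) := by
  have entry : ∀ (u : Fin M → ℝ) (i j : Fin N),
      (∑ k, u k • Matrix.vecMulVec (φ k) (φ k)) i j
        = ∑ k, u k * (φ k i * φ k j) := by
    intro u i j
    simp [Matrix.sum_apply, Matrix.vecMulVec_apply]
  constructor
  · rintro ⟨x, hx0, hxne, A, hA, heq⟩
    set u : Fin M → ℝ := fun k => x k ^ 2 with hu
    have hsum : ∑ k, u k • Matrix.vecMulVec (φ k) (φ k)
        = A • (1 : Matrix (Fin N) (Fin N) ℝ) := by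
      rw [← heq]
      congr 1
      funext k
      ext i j
      simp [Matrix.vecMulVec_apply, hu]
      ring
    have key : ∀ i j : Fin N, (∑ k, u k * (φ k i * φ k j))
        = A * (if i = j then 1 else 0) := by
      intro i j
      have := congrFun (congrFun hsum i) j
      rw [entry] at this
      simpa [Matrix.one_apply] using this
    refine ⟨u, fun k => sq_nonneg _, ?_, ?_, ?_⟩
    · intro h
      apply hxne
      funext k
      have := congrFun h k
      simpa [hu, pow_eq_zero_iff] using this
    · funext r
      show ∑ k, Fmap hN (φ k) r * u k = 0
      cases r with
      | inl j =>
        have h1 := key ⟨0, hN⟩ ⟨0, hN⟩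
        have h2 := key ⟨j.val + 1, by have := j.isLt; omega⟩
          ⟨j.val + 1, by have := j.isLt; omega⟩
        simp only [if_pos rfl, mul_one] at h1 h2
        simp only [Fmap]
        rw [show (∑ k, ((φ k ⟨0, hN⟩)^2 - (φ k ⟨j.val+1, _⟩)^2) * u k)
          = (∑ k, u k * ((φ k ⟨0, hN⟩) * (φ k ⟨0, hN⟩)))
            - (∑ k, u k * ((φ k ⟨j.val+1, by have := j.isLt; omega⟩)
              * (φ k ⟨j.val+1, by have := j.isLt; omega⟩))) by
            rw [← Finset.sum_sub_distrib]; congr 1; funext k; ring]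
        rw [h1, h2]; ring
      | inr p =>
        have h1 := key p.1.1 p.1.2
        have hne : p.1.1 ≠ p.1.2 := ne_of_lt p.2
        rw [if_neg hne, mul_zero] at h1
        simp only [Fmap]
        rw [show (∑ k, (φ k p.1.1 * φ k p.1.2) * u k)
          = ∑ k, u k * (φ k p.1.1 * φ k p.1.2) by
            congr 1; funext k; ring]
        exact h1
    · rw [hsum]
      intro h
      have := congrFun (congrFun h ⟨0, hN⟩) ⟨0, hN⟩
      simp [Matrix.one_apply] at this
      exact hA.ne' this
  · rintro ⟨u, hu0, hune, hker, hSne⟩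
    have hker' : ∀ r, ∑ k, Fmap hN (φ k) r * u k = 0 := by
      intro r
      exact congrFun hker r
    set A : ℝ := ∑ k, u k * (φ k ⟨0, hN⟩ * φ k ⟨0, hN⟩) with hA
    have hdiag : ∀ i : Fin N, (∑ k, u k * (φ k i * φ k i)) = A := by
      intro i
      rcases Nat.eq_zero_or_pos i.val with h0 | hpos
      · have : i = ⟨0, hN⟩ := by ext; exact h0
        rw [this]
      · have hj : i.val - 1 < N - 1 := by have := i.isLt; omega
        have h := hker' (Sum.inl ⟨i.val - 1, hj⟩)
        simp only [Fmap] at h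
        have hi : (⟨(i.val - 1) + 1, by omega⟩ : Fin N) = i := by
          ext; simp; omega
        rw [hi] at h
        have : (∑ k, (φ k ⟨0, hN⟩ ^ 2 - φ k i ^ 2) * u k)
            = A - ∑ k, u k * (φ k i * φ k i) := by
          rw [hA, ← Finset.sum_sub_distrib]; congr 1; funext k; ring
        rw [this] at h
        linarith
    have hoff : ∀ i j : Fin N, i ≠ j → (∑ k, u k * (φ k i * φ k j)) = 0 := by
      have base : ∀ i j : Fin N, i < j → (∑ k, u k * (φ k i * φ k j)) = 0 := by
        intro i j hij
        have h := hker' (Sum.inr ⟨(i, j), hij⟩)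
        simp only [Fmap] at h
        rw [← h]; congr 1; funext k; ring
      intro i j hij
      rcases lt_or_gt_of_ne hij with h | h
      · exact base i j h
      · rw [← base j i h]; congr 1; funext k; ring
    have hSeq : ∑ k, u k • Matrix.vecMulVec (φ k) (φ k)
        = A • (1 : Matrix (Fin N) (Fin N) ℝ) := by
      ext i j
      rw [entry]
      rcases eq_or_ne i j with rfl | hij
      · simp [Matrix.one_apply, hdiag i]
      · simp [Matrix.one_apply, hij, hoff i j hij]
    have hApos : 0 < A := by
      have hAnn : 0 ≤ A := Finset.sum_nonneg fun k _ =>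
        mul_nonneg (hu0 k) (mul_self_nonneg _)
      rcases hAnn.lt_or_eq with h | h
      · exact h
      · exfalso; apply hSne; rw [hSeq, ← h]; simp
    refine ⟨fun k => Real.sqrt (u k), fun k => Real.sqrt_nonneg _, ?_, A, hApos, ?_⟩
    · intro h
      apply hune
      funext k
      have := congrFun h k
      simp only [Pi.zero_apply] at this ⊢
      exact (Real.sqrt_eq_zero (hu0 k)).mp this
    · rw [← hSeq]
      congr 1
      funext k
      ext i j
      simp only [Matrix.vecMulVec_apply, Pi.smul_apply, smul_eq_mul,
        Matrix.smul_apply]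
      have : Real.sqrt (u k) * Real.sqrt (u k) = u k :=
        Real.mul_self_sqrt (hu0 k)
      calc Real.sqrt (u k) * φ k i * (Real.sqrt (u k) * φ k j)
          = (Real.sqrt (u k) * Real.sqrt (u k)) * (φ k i * φ k j) := by ring
        _ = u k * (φ k i * φ k j) := by rw [this]
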